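/- The HiPPO-LegS matrix A with entries A_{nk} = −(2n+1)^{1/2}(2k+1)^{1/2} for n > k, −(n+1) for n = k, and 0 for n < k, decomposes as A = A^Normal − P Pᵀ, where P_n = (n+1/2)^{1/2} and A^Normal has entries −(n+1/2)^{1/2}(k+1/2)^{1/2} for n > k, −1/2 for n = k, and +(n+1/2)^{1/2}(k+1/2)^{1/2} for n < k. -/
import Mathlib


open Matrix

/-- HiPPO-LegS decomposition: `A = A^Normal − P Pᵀ`, where
`A_{nk} = −√(2n+1)√(2k+1)` for `n > k`, `−(n+1)` for `n = k`, `0` for `n < k`;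
`P_n = √(n+1/2)`; and `A^Normal_{nk} = −√(n+1/2)√(k+1/2)` for `n > k`, `−1/2` for `n = k`,
`+√(n+1/2)√(k+1/2)` for `n < k`. -/
theorem stmt16 {N : ℕ}
    (A : Matrix (Fin N) (Fin N) ℝ)
    (hA : ∀ n k : Fin N, A n k =
      if (k : ℕ) < (n : ℕ) then -(Real.sqrt (2 * (n : ℝ) + 1) * Real.sqrt (2 * (k : ℝ) + 1))
      else if (n : ℕ) = (k : ℕ) then -((n : ℝ) + 1) else 0)
    (P : Fin N → ℝ) (hP : ∀ n, P n = Real.sqrt ((n : ℝ) + 1 / 2))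
    (ANormal : Matrix (Fin N) (Fin N) ℝ)
    (hAN : ∀ n k : Fin N, ANormal n k =
      if (k : ℕ) < (n : ℕ) then -(Real.sqrt ((n : ℝ) + 1 / 2) * Real.sqrt ((k : ℝ) + 1 / 2))
      else if (n : ℕ) = (k : ℕ) then -(1 / 2)
      else Real.sqrt ((n : ℝ) + 1 / 2) * Real.sqrt ((k : ℝ) + 1 / 2)) :
    A = ANormal - Matrix.of (fun n k => P n * P k) := by
  ext n k
  have hnn : (0:ℝ) ≤ (n : ℝ) + 1 / 2 := by positivity
  have hkk : (0:ℝ) ≤ (k : ℝ) + 1 / 2 := by positivity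
  have key : ∀ x : ℝ, 0 ≤ x + 1/2 → Real.sqrt (2 * x + 1) = Real.sqrt 2 * Real.sqrt (x + 1/2) := by
    intro x hx
    rw [← Real.sqrt_mul (by norm_num)]
    ring_nf
  simp only [Matrix.sub_apply, Matrix.of_apply, hA, hAN, hP]
  rcases lt_trichotomy (k : ℕ) (n : ℕ) with h | h | h
  · simp only [if_pos h]
    rw [key _ hnn, key _ hkk]
    have h2 : Real.sqrt 2 * Real.sqrt 2 = 2 := Real.mul_self_sqrt (by norm_num)
    linear_combination (-Real.sqrt ((n:ℝ)+1/2) * Real.sqrt ((k:ℝ)+1/2)) * h2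
  · have hnk : (n:ℕ) = (k:ℕ) := h.symm
    simp only [if_neg (by omega : ¬ (k:ℕ) < (n:ℕ)), if_pos hnk]
    have : ((n:Fin N) : ℝ) = ((k:Fin N) : ℝ) := by exact_mod_cast congrArg (Nat.cast : ℕ → ℝ) hnk
    rw [this, Real.mul_self_sqrt hkk]; ring
  · simp only [if_neg (by omega : ¬ (k:ℕ) < (n:ℕ)), if_neg (by omega : ¬ (n:ℕ) = (k:ℕ))]
    ring
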